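/- arXiv:2011.03331 — 2 statements merged into one kernel-verified Lean document; each statement's English description precedes it below -/
import Mathlib

section
/- In a minimum segmentation, every segmentation point lies strictly inside some MNOST: suppose every single-edge subtrajectory of T = v_0 … v_{k−1} is optimal, and let 0 = b_0 < b_1 < … < b_B = k−1 be a segmentation of T whose number of segments B is minimal among all segmentations of T. Then for every segmentation point b_l (1 ≤ l ≤ B−1) there exists a minimal non-optimal subtrajectory T(i, j) of T with i < b_l < j. -/
open scoped ENNReal

variable {V : Type*}

/-- `f 0, f 1, …, f m` is a trajectory: every consecutive pair is joined by an edge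
(of finite weight). -/
def IsTraj (w : V → V → ℝ≥0∞) (m : ℕ) (f : ℕ → V) : Prop :=
  ∀ i < m, w (f i) (f (i + 1)) < ⊤

/-- The cost of the trajectory `f 0, …, f m`. -/
noncomputable def trajCost (w : V → V → ℝ≥0∞) (m : ℕ) (f : ℕ → V) : ℝ≥0∞ :=
  ∑ i ∈ Finset.range m, w (f i) (f (i + 1))

/-- The distance from `u` to `v`: the infimum of costs of all trajectories from `u` to `v`. -/
noncomputable def netDist (w : V → V → ℝ≥0∞) (u v : V) : ℝ≥0∞ :=
  ⨅ (m : ℕ) (f : ℕ → V) (_ : f 0 = u) (_ : f m = v) (_ : IsTraj w m f), trajCost w m f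

/-- The subtrajectory `T(i, j)` of the trajectory given by `f` is optimal. -/
def SegOpt (w : V → V → ℝ≥0∞) (f : ℕ → V) (i j : ℕ) : Prop :=
  trajCost w (j - i) (fun l => f (i + l)) = netDist w (f i) (f j)

/-- `b 0 = 0 < b 1 < … < b B = k - 1` is a segmentation of the trajectory
`f 0, …, f (k-1)` into `B` optimal segments. -/
def IsSeg (w : V → V → ℝ≥0∞) (f : ℕ → V) (k B : ℕ) (b : ℕ → ℕ) : Prop :=
  b 0 = 0 ∧ b B = k - 1 ∧ (∀ l < B, b l < b (l + 1)) ∧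
    ∀ l < B, SegOpt w f (b l) (b (l + 1))

/-- `T(i, j)` is a minimal non-optimal subtrajectory (MNOST). -/
def IsMNOST (w : V → V → ℝ≥0∞) (f : ℕ → V) (i j : ℕ) : Prop :=
  i < j ∧ ¬ SegOpt w f i j ∧ SegOpt w f (i + 1) j ∧ SegOpt w f i (j - 1)

section Aux

lemma trajCost_add (w : V → V → ℝ≥0∞) (a c : ℕ) (f : ℕ → V) :
    trajCost w (a + c) f = trajCost w a f + trajCost w c (fun l => f (a + l)) := by
  unfold trajCost
  rw [Finset.sum_range_add]
  rfl

lemma netDist_le_trajCost (w : V → V → ℝ≥0∞) {u v : V} (m : ℕ) (f : ℕ → V)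
    (hu : f 0 = u) (hv : f m = v) (h : IsTraj w m f) :
    netDist w u v ≤ trajCost w m f := by
  unfold netDist
  exact iInf_le_of_le m (iInf_le_of_le f (iInf_le_of_le hu (iInf_le_of_le hv (iInf_le _ h))))

lemma isTraj_sub {w : V → V → ℝ≥0∞} {k : ℕ} {f : ℕ → V} (htraj : IsTraj w (k - 1) f)
    {i j : ℕ} (hj : j ≤ k - 1) : IsTraj w (j - i) (fun l => f (i + l)) := by
  intro l hl
  exact htraj (i + l) (by omega)

lemma netDist_le_concat (w : V → V → ℝ≥0∞) {u x v : V}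
    (m1 : ℕ) (f : ℕ → V) (hf0 : f 0 = u) (hf1 : f m1 = x) (hft : IsTraj w m1 f)
    (m2 : ℕ) (g : ℕ → V) (hg0 : g 0 = x) (hg1 : g m2 = v) (hgt : IsTraj w m2 g) :
    netDist w u v ≤ trajCost w m1 f + trajCost w m2 g := by
  set h : ℕ → V := fun n => if n < m1 then f n else g (n - m1) with hh
  have hmid : ∀ n, m1 ≤ n → h n = g (n - m1) := by
    intro n hn; simp only [hh]; rw [if_neg (by omega)]
  have hlow : ∀ n, n < m1 → h n = f n := by
    intro n hn; simp only [hh]; rw [if_pos hn]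
  have heq : ∀ n ≤ m1, h n = f n := by
    intro n hn
    rcases lt_or_eq_of_le hn with hlt | rfl
    · exact hlow n hlt
    · rw [hmid n le_rfl, Nat.sub_self, hg0, hf1]
  have h0 : h 0 = u := by rw [heq 0 (Nat.zero_le _), hf0]
  have hshift : ∀ n, h (m1 + n) = g n := by
    intro n
    rw [hmid _ (Nat.le_add_right _ _), Nat.add_sub_cancel_left]
  have hm : h (m1 + m2) = v := by rw [hshift m2, hg1]
  have htr : IsTraj w (m1 + m2) h := by
    intro n hn
    rcases lt_or_ge n m1 with hlt | hle
    · rw [hlow n hlt, heq (n + 1) (by omega)]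
      exact hft n hlt
    · obtain ⟨c, rfl⟩ : ∃ c, n = m1 + c := ⟨n - m1, by omega⟩
      rw [hshift c, show m1 + c + 1 = m1 + (c + 1) by omega, hshift (c + 1)]
      exact hgt c (by omega)
  have hcost : trajCost w (m1 + m2) h = trajCost w m1 f + trajCost w m2 g := by
    rw [trajCost_add]
    congr 1
    · unfold trajCost
      refine Finset.sum_congr rfl fun i hi => ?_
      rw [Finset.mem_range] at hi
      rw [hlow i hi, heq (i + 1) (by omega)]
    · unfold trajCost
      refine Finset.sum_congr rfl fun i _ => ?_
      show w (h (m1 + i)) (h (m1 + (i + 1))) = w (g i) (g (i + 1))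
      rw [hshift i, hshift (i + 1)]
  rw [← hcost]
  exact netDist_le_trajCost w _ h h0 hm htr

lemma netDist_triangle (w : V → V → ℝ≥0∞) (u x v : V) :
    netDist w u v ≤ netDist w u x + netDist w x v := by
  conv_rhs => rw [netDist, netDist]
  simp only [ENNReal.iInf_add, ENNReal.add_iInf, le_iInf_iff]
  intro m2 g hg0 hg1 hgt m1 f hf0 hf1 hft
  exact netDist_le_concat w m1 f hf0 hf1 hft m2 g hg0 hg1 hgt

lemma trajCost_eq_Ico (w : V → V → ℝ≥0∞) (f : ℕ → V) {i j : ℕ} (h : i ≤ j) :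
    trajCost w (j - i) (fun l => f (i + l)) = ∑ n ∈ Finset.Ico i j, w (f n) (f (n + 1)) := by
  unfold trajCost
  rw [Finset.sum_Ico_eq_sum_range]
  rfl

lemma segOpt_sub {w : V → V → ℝ≥0∞} {k : ℕ} {f : ℕ → V} (htraj : IsTraj w (k - 1) f)
    {i i' j' j : ℕ} (h1 : i ≤ i') (h2 : i' ≤ j') (h3 : j' ≤ j) (hj : j ≤ k - 1)
    (hopt : SegOpt w f i j) : SegOpt w f i' j' := by
  have hij : i ≤ j := h1.trans (h2.trans h3)
  have hi'j : i' ≤ j := h2.trans h3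
  have hIco : ∀ a b : ℕ, b ≤ k - 1 → ∑ n ∈ Finset.Ico a b, w (f n) (f (n + 1)) ≠ ⊤ := by
    intro a b hb
    refine (ENNReal.sum_lt_top.2 fun n hn => ?_).ne
    rw [Finset.mem_Ico] at hn
    exact htraj n (by omega)
  have hle : ∀ a b : ℕ, a ≤ b → b ≤ k - 1 →
      netDist w (f a) (f b) ≤ ∑ n ∈ Finset.Ico a b, w (f n) (f (n + 1)) := by
    intro a b hab hb
    have h := netDist_le_trajCost w (b - a) (fun l => f (a + l))
      (show f (a + 0) = f a by rw [Nat.add_zero])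
      (show f (a + (b - a)) = f b by congr 1; omega)
      (isTraj_sub htraj hb)
    rwa [trajCost_eq_Ico w f hab] at h
  unfold SegOpt at hopt ⊢
  rw [trajCost_eq_Ico w f h2]
  rw [trajCost_eq_Ico w f hij] at hopt
  refine le_antisymm ?_ (hle i' j' h2 (h3.trans hj))
  have hsplit : ∑ n ∈ Finset.Ico i j, w (f n) (f (n + 1)) =
      ∑ n ∈ Finset.Ico i i', w (f n) (f (n + 1)) +
      ∑ n ∈ Finset.Ico i' j', w (f n) (f (n + 1)) +
      ∑ n ∈ Finset.Ico j' j, w (f n) (f (n + 1)) := by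
    rw [add_assoc, Finset.sum_Ico_consecutive _ h2 h3, Finset.sum_Ico_consecutive _ h1 hi'j]
  have hchain : netDist w (f i) (f j) ≤
      ∑ n ∈ Finset.Ico i i', w (f n) (f (n + 1)) + netDist w (f i') (f j') +
      ∑ n ∈ Finset.Ico j' j, w (f n) (f (n + 1)) := by
    calc netDist w (f i) (f j) ≤ netDist w (f i) (f i') + netDist w (f i') (f j) :=
        netDist_triangle w _ _ _
      _ ≤ netDist w (f i) (f i') + (netDist w (f i') (f j') + netDist w (f j') (f j)) := by
        gcongr
        exact netDist_triangle w _ _ _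
      _ ≤ ∑ n ∈ Finset.Ico i i', w (f n) (f (n + 1)) + (netDist w (f i') (f j') +
          ∑ n ∈ Finset.Ico j' j, w (f n) (f (n + 1))) := by
        gcongr
        · exact hle i i' h1 (h2.trans (h3.trans hj))
        · exact hle j' j h3 hj
      _ = _ := by ring
  rw [← hopt, hsplit] at hchain
  rw [ENNReal.add_le_add_iff_right (hIco j' j hj)] at hchain
  rwa [ENNReal.add_le_add_iff_left (hIco i i' (h2.trans (h3.trans hj)))] at hchain

end Aux

/-- In a minimum segmentation, every segmentation point lies strictly inside some MNOST. -/
theorem min_segmentation_points_lie_in_mnosts [Fintype V]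
    (w : V → V → ℝ≥0∞) (k B : ℕ) (hk : 1 ≤ k) (f : ℕ → V) (b : ℕ → ℕ)
    (htraj : IsTraj w (k - 1) f)
    (hedges : ∀ i < k - 1, SegOpt w f i (i + 1))
    (hseg : IsSeg w f k B b)
    (hmin : ∀ B' (b' : ℕ → ℕ), IsSeg w f k B' b' → B ≤ B') :
    ∀ l, 1 ≤ l → l ≤ B - 1 →
      ∃ i j, j ≤ k - 1 ∧ IsMNOST w f i j ∧ i < b l ∧ b l < j := by
  classical
  intro l hl1 hl2
  obtain ⟨hb0, hbB, hblt, hbopt⟩ := hseg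
  have hB2 : 2 ≤ B := by omega
  have hmono : ∀ p q, p ≤ q → q ≤ B → b p ≤ b q := by
    intro p q hpq hqB
    induction q with
    | zero => have : p = 0 := by omega
              rw [this]
    | succ n ih =>
      rcases Nat.lt_or_ge p (n + 1) with h | h
      · exact le_trans (ih (by omega) (by omega)) (le_of_lt (hblt n (by omega)))
      · have : p = n + 1 := by omega
        rw [this]
  have hblk : b (l + 1) ≤ k - 1 := by
    rw [← hbB]; exact hmono (l + 1) B (by omega) le_rfl
  have hnon : ¬ SegOpt w f (b (l - 1)) (b (l + 1)) := by
    intro hopt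
    have hseg' : IsSeg w f k (B - 1) (fun m => if m < l then b m else b (m + 1)) := by
      refine ⟨?_, ?_, ?_, ?_⟩
      · show (if 0 < l then b 0 else b 1) = 0
        rw [if_pos (by omega)]; exact hb0
      · show (if B - 1 < l then b (B - 1) else b (B - 1 + 1)) = k - 1
        rw [if_neg (by omega), show B - 1 + 1 = B by omega]; exact hbB
      · intro m hm
        show (if m < l then b m else b (m + 1)) < (if m + 1 < l then b (m + 1) else b (m + 1 + 1))
        split_ifs with h1 h2 h2
        · exact hblt m (by omega)
        · exact lt_trans (hblt m (by omega)) (hblt (m + 1) (by omega))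
        · exact (h1 (by omega)).elim
        · exact hblt (m + 1) (by omega)
      · intro m hm
        show SegOpt w f (if m < l then b m else b (m + 1)) (if m + 1 < l then b (m + 1) else b (m + 1 + 1))
        split_ifs with h1 h2 h2
        · exact hbopt m (by omega)
        · obtain rfl : l = m + 1 := by omega
          simpa using hopt
        · exact (h1 (by omega)).elim
        · exact hbopt (m + 1) (by omega)
    have := hmin (B - 1) _ hseg'
    omega
  have hP : ∃ n, ∃ i j, b (l - 1) ≤ i ∧ i ≤ b l ∧ b l ≤ j ∧ j ≤ b (l + 1) ∧
      ¬ SegOpt w f i j ∧ j - i = n :=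
    ⟨_, b (l - 1), b (l + 1), le_rfl, hmono (l - 1) l (by omega) (by omega),
      hmono l (l + 1) (by omega) (by omega), le_rfl, hnon, rfl⟩
  obtain ⟨i, j, hbi, hib, hbj, hjb, hnopt, hn⟩ := Nat.find_spec hP
  have hminP := fun m (hm : m < Nat.find hP) => Nat.find_min hP hm
  have hjk : j ≤ k - 1 := le_trans hjb hblk
  have hil : i < b l := by
    rcases eq_or_lt_of_le hib with rfl | h
    · exact absurd (segOpt_sub htraj le_rfl hbj hjb hblk (hbopt l (by omega))) hnopt
    · exact h
  have hlj : b l < j := by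
    rcases eq_or_lt_of_le hbj with rfl | h
    · exfalso
      have hopt' : SegOpt w f (b (l - 1)) (b l) := by
        have := hbopt (l - 1) (by omega)
        rwa [show l - 1 + 1 = l by omega] at this
      have hblK : b l ≤ k - 1 := by
        rw [← hbB]; exact hmono l B (by omega) le_rfl
      exact hnopt (segOpt_sub htraj hbi hib le_rfl hblK hopt')
    · exact h
  have hij : i < j := lt_of_lt_of_le hil hbj
  have hopt1 : SegOpt w f (i + 1) j := by
    by_contra hno
    exact hminP (j - (i + 1)) (by omega) ⟨i + 1, j, by omega, by omega, hbj, hjb, hno, rfl⟩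
  have hopt2 : SegOpt w f i (j - 1) := by
    by_contra hno
    exact hminP (j - 1 - i) (by omega) ⟨i, j - 1, hbi, hib, by omega, by omega, hno, rfl⟩
  exact ⟨i, j, hjk, ⟨hij, hnopt, hopt1, hopt2⟩, hil, hlj⟩
end

section
/- MINDTS is a valid lower bound on the distance to a segmentation point: suppose every single-edge subtrajectory of T = v_0 … v_{k−1} is optimal, fix an index 0 ≤ s ≤ k−1, and for a MNOST T(i, j) of T define d2(s, (i,j)) = 0 if i < s < j, d2(s, (i,j)) = (i+1) − s if s ≤ i, and d2(s, (i,j)) = s − (j−1) if s ≥ j; let MINDTS(s) be the minimum of d2(s, (i,j)) over all MNOSTs of T. Then in every segmentation of T with the minimum number of segments, every segmentation point b_l satisfies |s − b_l| ≥ MINDTS(s). -/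
open scoped ENNReal

variable {V : Type*}

/-- The distance `d2` from index `s` to the interior of the open interval `(i, j)`. -/
def d2 (s i j : ℕ) : ℕ :=
  if i < s ∧ s < j then 0 else if s ≤ i then (i + 1) - s else s - (j - 1)

/-- `MINDTS s`: the minimum of `d2 s (i, j)` over all MNOSTs `T(i, j)` of `T`. -/
noncomputable def MINDTS (w : V → V → ℝ≥0∞) (f : ℕ → V) (k s : ℕ) : ℕ :=
  sInf {e | ∃ i j, j ≤ k - 1 ∧ IsMNOST w f i j ∧ e = d2 s i j}

lemma netDist_le_trajCost_s12 (w : V → V → ℝ≥0∞) (m : ℕ) (g : ℕ → V) (hg : IsTraj w m g) :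
    netDist w (g 0) (g m) ≤ trajCost w m g := by
  unfold netDist
  exact iInf_le_of_le m (iInf_le_of_le g (iInf_le_of_le rfl (iInf_le_of_le rfl (iInf_le _ hg))))

lemma exists_traj_of_netDist_lt {w : V → V → ℝ≥0∞} {u v : V} {X : ℝ≥0∞}
    (h : netDist w u v < X) :
    ∃ m g, g 0 = u ∧ g m = v ∧ IsTraj w m g ∧ trajCost w m g < X := by
  unfold netDist at h
  simp only [iInf_lt_iff] at h
  obtain ⟨m, g, h1, h2, h3, h4⟩ := h
  exact ⟨m, g, h1, h2, h3, h4⟩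

lemma trajCost_lt_top {w : V → V → ℝ≥0∞} {m : ℕ} {g : ℕ → V} (hg : IsTraj w m g) :
    trajCost w m g < ⊤ := by
  unfold trajCost
  exact ENNReal.sum_lt_top.mpr fun i hi => hg i (Finset.mem_range.mp hi)

lemma concat_traj (w : V → V → ℝ≥0∞) (m n : ℕ) (f g : ℕ → V)
    (hf : IsTraj w m f) (hg : IsTraj w n g) (hfg : f m = g 0) :
    ∃ h : ℕ → V, IsTraj w (m + n) h ∧ h 0 = f 0 ∧ h (m + n) = g n ∧
      trajCost w (m + n) h = trajCost w m f + trajCost w n g := by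
  set h : ℕ → V := fun i => if i < m then f i else g (i - m) with hh
  have key : ∀ i, i < m → w (h i) (h (i + 1)) = w (f i) (f (i + 1)) := by
    intro i hi
    have e1 : h i = f i := if_pos hi
    have e2 : h (i + 1) = f (i + 1) := by
      by_cases hm : i + 1 < m
      · exact if_pos hm
      · have hem : i + 1 = m := by omega
        have : h (i + 1) = g (i + 1 - m) := if_neg hm
        rw [this, hem]
        simp [hfg.symm]
    rw [e1, e2]
  have key2 : ∀ i, h (m + i) = g i := by
    intro i
    have : ¬ (m + i < m) := by omega
    have e : h (m + i) = g (m + i - m) := if_neg this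
    rw [e]
    congr 1
    omega
  refine ⟨h, ?_, ?_, ?_, ?_⟩
  · intro i hi
    by_cases him : i < m
    · rw [key i him]; exact hf i him
    · obtain ⟨d, rfl⟩ := Nat.exists_eq_add_of_le (Nat.le_of_not_lt him)
      have e1 : h (m + d) = g d := key2 d
      have e2 : h (m + d + 1) = g (d + 1) := by
        have := key2 (d + 1); rwa [← Nat.add_assoc] at this
      rw [e1, e2]
      exact hg d (by omega)
  · by_cases hm : 0 < m
    · exact if_pos hm
    · have hm0 : m = 0 := by omega
      subst hm0
      have e : h 0 = g 0 := if_neg (by omega)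
      rw [e, ← hfg]
  · exact key2 n
  · unfold trajCost
    rw [Finset.sum_range_add]
    congr 1
    · exact Finset.sum_congr rfl fun i hi => key i (Finset.mem_range.mp hi)
    · refine Finset.sum_congr rfl fun i _ => ?_
      have e1 : h (m + i) = g i := key2 i
      have e2 : h (m + i + 1) = g (i + 1) := by
        have := key2 (i + 1); rwa [← Nat.add_assoc] at this
      rw [e1, e2]

lemma trajCost_split (w : V → V → ℝ≥0∞) (f : ℕ → V) (a c e : ℕ) (hac : a ≤ c) (hce : c ≤ e) :
    trajCost w (e - a) (fun l => f (a + l)) =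
      trajCost w (c - a) (fun l => f (a + l)) + trajCost w (e - c) (fun l => f (c + l)) := by
  unfold trajCost
  have he : e - a = (c - a) + (e - c) := by omega
  rw [he, Finset.sum_range_add]
  congr 1
  refine Finset.sum_congr rfl fun i _ => ?_
  have h1 : a + (c - a + i) = c + i := by omega
  have h2 : a + (c - a + i + 1) = c + i + 1 := by omega
  simp only [h1, h2]
  rfl

lemma segOpt_mono (w : V → V → ℝ≥0∞) (f : ℕ → V) {a a' c' c : ℕ}
    (htraj : ∀ i, a ≤ i → i < c → w (f i) (f (i + 1)) < ⊤)
    (hopt : SegOpt w f a c) (h1 : a ≤ a') (h2 : a' ≤ c') (h3 : c' ≤ c) :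
    SegOpt w f a' c' := by
  have subtraj : ∀ x y : ℕ, a ≤ x → x ≤ y → y ≤ c → IsTraj w (y - x) (fun l => f (x + l)) := by
    intro x y hx hxy hyc i hi
    have := htraj (x + i) (by omega) (by omega)
    simpa [Nat.add_assoc] using this
  have hle : ∀ x y : ℕ, a ≤ x → x ≤ y → y ≤ c →
      netDist w (f x) (f y) ≤ trajCost w (y - x) (fun l => f (x + l)) := by
    intro x y hx hxy hyc
    have := netDist_le_trajCost_s12 w (y - x) (fun l => f (x + l)) (subtraj x y hx hxy hyc)
    simpa [Nat.add_sub_cancel' hxy] using this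
  unfold SegOpt
  refine le_antisymm ?_ (hle a' c' h1 h2 h3)
  by_contra hlt
  push_neg at hlt
  obtain ⟨m, g, hg0, hgm, hgt, hgc⟩ := exists_traj_of_netDist_lt hlt
  obtain ⟨p₁, ht1, h10, h1e, h1c⟩ := concat_traj w (a' - a) m (fun l => f (a + l)) g
      (subtraj a a' le_rfl h1 (h2.trans h3)) hgt
      (by simp only [Nat.add_sub_cancel' h1]; exact hg0.symm)
  obtain ⟨p₂, ht2, h20, h2e, h2c⟩ := concat_traj w ((a' - a) + m) (c - c') p₁
      (fun l => f (c' + l)) ht1 (subtraj c' c (h1.trans h2) h3 le_rfl)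
      (by rw [h1e, hgm]; rfl)
  have hnd := netDist_le_trajCost_s12 w _ p₂ ht2
  rw [h20, h10] at hnd
  rw [h2e] at hnd
  simp only [Nat.add_zero, Nat.add_sub_cancel' (h3 : c' ≤ c)] at hnd
  have hXf : trajCost w (a' - a) (fun l => f (a + l)) ≠ ⊤ :=
    (trajCost_lt_top (subtraj a a' le_rfl h1 (h2.trans h3))).ne
  have hZf : trajCost w (c - c') (fun l => f (c' + l)) ≠ ⊤ :=
    (trajCost_lt_top (subtraj c' c (h1.trans h2) h3 le_rfl)).ne
  have hstep : trajCost w (a' - a) (fun l => f (a + l)) + trajCost w m g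
      < trajCost w (a' - a) (fun l => f (a + l)) + trajCost w (c' - a') (fun l => f (a' + l)) :=
    ENNReal.add_lt_add_left hXf hgc
  have hstep2 := ENNReal.add_lt_add_right hZf hstep
  have hsplit : trajCost w (c - a) (fun l => f (a + l)) =
      trajCost w (a' - a) (fun l => f (a + l)) + trajCost w (c' - a') (fun l => f (a' + l))
        + trajCost w (c - c') (fun l => f (c' + l)) := by
    rw [trajCost_split w f a a' c h1 (h2.trans h3),
      trajCost_split w f a' c' c h2 h3, ← add_assoc]
  have hfin : netDist w (f a) (f c) < netDist w (f a) (f c) := by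
    calc netDist w (f a) (f c) ≤ trajCost w ((a' - a) + m + (c - c')) p₂ := hnd
    _ = trajCost w (a' - a) (fun l => f (a + l)) + trajCost w m g
        + trajCost w (c - c') (fun l => f (c' + l)) := by rw [h2c, h1c]
    _ < trajCost w (a' - a) (fun l => f (a + l)) + trajCost w (c' - a') (fun l => f (a' + l))
        + trajCost w (c - c') (fun l => f (c' + l)) := hstep2
    _ = trajCost w (c - a) (fun l => f (a + l)) := hsplit.symm
    _ = netDist w (f a) (f c) := hopt
  exact absurd hfin (lt_irrefl _)

/-- `MINDTS` is a valid lower bound: in every minimum segmentation, every segmentation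
point `b l` satisfies `MINDTS s ≤ |s - b l|`. -/
theorem mindts_lower_bound [Fintype V]
    (w : V → V → ℝ≥0∞) (k B : ℕ) (f : ℕ → V) (b : ℕ → ℕ) (s : ℕ) (hs : s ≤ k - 1)
    (htraj : IsTraj w (k - 1) f)
    (hedges : ∀ i < k - 1, SegOpt w f i (i + 1))
    (hseg : IsSeg w f k B b)
    (hmin : ∀ B' (b' : ℕ → ℕ), IsSeg w f k B' b' → B ≤ B') :
    ∀ l, 1 ≤ l → l ≤ B - 1 → MINDTS w f k s ≤ Nat.dist s (b l) := by
  intro l hl1 hlB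
  obtain ⟨hb0, hbB, hbinc, hbopt⟩ := hseg
  have hB2 : 2 ≤ B := by omega
  have hmono : ∀ m m', m ≤ m' → m' ≤ B → b m ≤ b m' := by
    intro m m' hmm' hm'B
    induction m' with
    | zero =>
      have h0 : m = 0 := by omega
      subst h0
      exact le_rfl
    | succ n ih =>
      rcases Nat.lt_or_ge m (n + 1) with h | h
      · exact le_trans (ih (by omega) (by omega)) (le_of_lt (hbinc n (by omega)))
      · have : m = n + 1 := by omega
        simp [this]
  set p := b l with hp
  set lo := b (l - 1) with hlo
  set hi := b (l + 1) with hhi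
  have hlp : lo < p := by
    have := hbinc (l - 1) (by omega)
    simpa [hlo, hp, Nat.sub_add_cancel hl1] using this
  have hph : p < hi := hbinc l (by omega)
  have hhik : hi ≤ k - 1 := by
    rw [← hbB]; exact hmono (l + 1) B (by omega) le_rfl
  have htraj' : ∀ i, lo ≤ i → i < hi → w (f i) (f (i + 1)) < ⊤ := fun i _ hi2 =>
    htraj i (by omega)
  -- the merged segment is non-optimal
  have hne : ¬ SegOpt w f lo hi := by
    intro hmerge
    set b' : ℕ → ℕ := fun m => if m < l then b m else b (m + 1) with hb'
    have hcon : IsSeg w f k (B - 1) b' := by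
      refine ⟨?_, ?_, ?_, ?_⟩
      · have : b' 0 = b 0 := if_pos (by omega)
        rw [this, hb0]
      · have : b' (B - 1) = b (B - 1 + 1) := if_neg (by omega)
        rw [this, show B - 1 + 1 = B from by omega, hbB]
      · intro m hm
        by_cases h1 : m + 1 < l
        · have e1 : b' m = b m := if_pos (by omega)
          have e2 : b' (m + 1) = b (m + 1) := if_pos h1
          rw [e1, e2]; exact hbinc m (by omega)
        · by_cases h2 : m < l
          · have e1 : b' m = b m := if_pos h2
            have e2 : b' (m + 1) = b (m + 2) := if_neg (by omega)
            rw [e1, e2]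
            have hml : m = l - 1 := by omega
            calc b m < b (m + 1) := hbinc m (by omega)
            _ < b (m + 2) := hbinc (m + 1) (by omega)
          · have e1 : b' m = b (m + 1) := if_neg h2
            have e2 : b' (m + 1) = b (m + 2) := if_neg (by omega)
            rw [e1, e2]; exact hbinc (m + 1) (by omega)
      · intro m hm
        by_cases h1 : m + 1 < l
        · have e1 : b' m = b m := if_pos (by omega)
          have e2 : b' (m + 1) = b (m + 1) := if_pos h1
          rw [e1, e2]; exact hbopt m (by omega)
        · by_cases h2 : m < l
          · have e1 : b' m = b m := if_pos h2
            have e2 : b' (m + 1) = b (m + 2) := if_neg (by omega)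
            rw [e1, e2]
            have hml : m = l - 1 := by omega
            have e3 : m + 2 = l + 1 := by omega
            rw [e3, hml]
            exact hmerge
          · have e1 : b' m = b (m + 1) := if_neg h2
            have e2 : b' (m + 1) = b (m + 2) := if_neg (by omega)
            rw [e1, e2]; exact hbopt (m + 1) (by omega)
    have := hmin (B - 1) b' hcon
    omega
  have hoptleft : SegOpt w f lo p := by
    have := hbopt (l - 1) (by omega)
    simpa [hlo, hp, Nat.sub_add_cancel hl1] using this
  have hoptright : SegOpt w f p hi := hbopt l (by omega)
  -- extract a minimal-span non-optimal interval around p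
  set S : Set ℕ :=
    {d | ∃ i j, lo ≤ i ∧ i < p ∧ p < j ∧ j ≤ hi ∧ ¬ SegOpt w f i j ∧ d = j - i} with hS
  have hSne : (hi - lo) ∈ S := ⟨lo, hi, le_rfl, hlp, hph, le_rfl, hne, rfl⟩
  obtain ⟨i, j, hloi, hip, hpj, hjhi, hnopt, hd⟩ := Nat.sInf_mem (Set.nonempty_of_mem hSne)
  have hmin' : ∀ d ∈ S, sInf S ≤ d := fun d hd => Nat.sInf_le hd
  have hsubL : ∀ x y : ℕ, lo ≤ x → x ≤ y → y ≤ p → SegOpt w f x y := by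
    intro x y hx hxy hyp
    refine segOpt_mono w f (fun t ht htc => htraj' t ht (by omega)) hoptleft hx hxy hyp
  have hsubR : ∀ x y : ℕ, p ≤ x → x ≤ y → y ≤ hi → SegOpt w f x y := by
    intro x y hx hxy hyp
    refine segOpt_mono w f (fun t ht htc => htraj' t (by omega) htc) hoptright hx hxy hyp
  have hmnost : IsMNOST w f i j := by
    refine ⟨by omega, hnopt, ?_, ?_⟩
    · by_contra hno
      rcases Nat.lt_or_ge (i + 1) p with hc | hc
      · have : sInf S ≤ j - (i + 1) :=
          hmin' _ ⟨i + 1, j, by omega, hc, hpj, hjhi, hno, rfl⟩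
        omega
      · have hip1 : i + 1 = p := by omega
        refine hno ?_
        rw [hip1]
        exact hsubR p j le_rfl (by omega) hjhi
    · by_contra hno
      rcases Nat.lt_or_ge p (j - 1) with hc | hc
      · have : sInf S ≤ (j - 1) - i :=
          hmin' _ ⟨i, j - 1, hloi, hip, hc, by omega, hno, rfl⟩
        omega
      · have hjp : j - 1 = p := by omega
        refine hno ?_
        exact hsubL i (j - 1) hloi (by omega) (by omega)
  have hmem : d2 s i j ∈ {e | ∃ i j, j ≤ k - 1 ∧ IsMNOST w f i j ∧ e = d2 s i j} :=
    ⟨i, j, by omega, hmnost, rfl⟩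
  refine le_trans (Nat.sInf_le hmem) ?_
  simp only [d2, Nat.dist]
  split_ifs <;> omega
end
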